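/- arXiv:2002.03994 — 2 statements merged into one kernel-verified Lean document; each statement's English description precedes it below -/
import Mathlib

section
/- Let p ≥ 3 be prime and let s ≥ 1 and m_0, m_1, …, m_s ∈ {0,…,p-1}. Then D_{m_0 + m_1·p + ⋯ + m_s·p^s}(x) ≡ (x^p - 1)^{m_1}·(x^{p^2} - 1)^{m_2}·⋯·(x^{p^s} - 1)^{m_s}·D_{m_0}(x) modulo p in (ℤ/pℤ)[x]. -/
open Polynomial Finset

/-- The derangement polynomial `D_n(x) = ∑_{k=0}^n C(n,k)·k!·(x-1)^{n-k}`. -/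
noncomputable def derPoly (n : ℕ) : Polynomial ℤ :=
  ∑ k ∈ Finset.range (n + 1), ((n.choose k * k.factorial : ℤ)) • (X - 1) ^ (n - k)

section Aux

variable (p : ℕ) [Fact p.Prime]

lemma derPoly_map (n : ℕ) : (derPoly n).map (Int.castRingHom (ZMod p)) =
    ∑ k ∈ Finset.range (n + 1),
      C (((n.choose k * k.factorial : ℕ) : ZMod p)) * (X - 1) ^ (n - k) := by
  simp only [derPoly, zsmul_eq_mul, Polynomial.map_sum, Polynomial.map_mul, Polynomial.map_pow,
    Polynomial.map_sub, Polynomial.map_one, map_X, Polynomial.map_intCast]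
  refine Finset.sum_congr rfl fun k _ => ?_
  simp [map_mul, Polynomial.C_eq_natCast]

lemma key_coeff (n k : ℕ) :
    (((n + p).choose k * k.factorial : ℕ) : ZMod p) = ((n.choose k * k.factorial : ℕ) : ZMod p) := by
  have hp := (Fact.out : p.Prime)
  rcases lt_or_ge k p with hk | hk
  · push_cast
    congr 1
    have h1 := (Choose.choose_modEq_choose_mod_mul_choose_div_nat (n := n + p) (k := k) (p := p))
    have h2 := (Choose.choose_modEq_choose_mod_mul_choose_div_nat (n := n) (k := k) (p := p))
    have hmod : (n + p) % p = n % p := Nat.add_mod_right n p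
    have hdiv : (n + p) / p = n / p + 1 := by
      rw [Nat.add_div_right _ hp.pos]
    rw [hmod, hdiv, Nat.mod_eq_of_lt hk, Nat.div_eq_of_lt hk] at h1
    rw [Nat.mod_eq_of_lt hk, Nat.div_eq_of_lt hk] at h2
    simp only [Nat.choose_zero_right, mul_one] at h1 h2
    have := (ZMod.natCast_eq_natCast_iff _ _ _).mpr (h1.trans h2.symm)
    exact_mod_cast this
  · have hfac : ((k.factorial : ℕ) : ZMod p) = 0 := by
      rw [ZMod.natCast_eq_zero_iff]
      exact hp.dvd_factorial.mpr hk
    push_cast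
    rw [hfac, mul_zero, mul_zero]

lemma derPoly_step (n : ℕ) :
    (derPoly (n + p)).map (Int.castRingHom (ZMod p)) =
      (X ^ p - 1) * (derPoly n).map (Int.castRingHom (ZMod p)) := by
  have hp := (Fact.out : p.Prime)
  have hchar : (X ^ p - 1 : (ZMod p)[X]) = (X - 1) ^ p := by
    rw [sub_pow_char, one_pow]
  rw [derPoly_map, derPoly_map, hchar, Finset.mul_sum]
  calc ∑ k ∈ Finset.range (n + p + 1),
        C ((((n + p).choose k * k.factorial : ℕ)) : ZMod p) * (X - 1) ^ (n + p - k)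
      = ∑ k ∈ Finset.range (n + p + 1),
        C (((n.choose k * k.factorial : ℕ)) : ZMod p) * (X - 1) ^ (n + p - k) := by
        exact Finset.sum_congr rfl fun k _ => by rw [key_coeff]
    _ = ∑ k ∈ Finset.range (n + 1),
        C (((n.choose k * k.factorial : ℕ)) : ZMod p) * (X - 1) ^ (n + p - k) := by
        refine (Finset.sum_subset ?_ ?_).symm
        · intro k hk; simp only [Finset.mem_range] at *; omega
        · intro k hk1 hk2
          simp only [Finset.mem_range] at hk1 hk2
          rw [Nat.choose_eq_zero_of_lt (by omega)]
          simp
    _ = ∑ k ∈ Finset.range (n + 1),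
        (X - 1) ^ p * (C (((n.choose k * k.factorial : ℕ)) : ZMod p) * (X - 1) ^ (n - k)) := by
        refine Finset.sum_congr rfl fun k hk => ?_
        simp only [Finset.mem_range] at hk
        have : n + p - k = p + (n - k) := by omega
        rw [this, pow_add]
        ring

lemma derPoly_mul_step (a n : ℕ) :
    (derPoly (n + a * p)).map (Int.castRingHom (ZMod p)) =
      (X ^ p - 1) ^ a * (derPoly n).map (Int.castRingHom (ZMod p)) := by
  induction a with
  | zero => simp
  | succ a ih =>
    have : n + (a + 1) * p = (n + a * p) + p := by ring
    rw [this, derPoly_step, ih, pow_succ]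
    ring

theorem derPoly_base_p_congr' (s : ℕ) (hs : 1 ≤ s) (m : ℕ → ℕ) :
    (derPoly (m 0 + ∑ i ∈ Finset.Icc 1 s, m i * p ^ i)).map (Int.castRingHom (ZMod p)) =
      (∏ i ∈ Finset.Icc 1 s, (X ^ (p ^ i) - 1) ^ (m i)) *
        (derPoly (m 0)).map (Int.castRingHom (ZMod p)) := by
  have hsum : ∑ i ∈ Finset.Icc 1 s, m i * p ^ i
      = (∑ i ∈ Finset.Icc 1 s, m i * p ^ (i - 1)) * p := by
    rw [Finset.sum_mul]
    refine Finset.sum_congr rfl fun i hi => ?_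
    have hi1 : 1 ≤ i := (Finset.mem_Icc.mp hi).1
    obtain ⟨j, rfl⟩ : ∃ j, i = j + 1 := ⟨i - 1, by omega⟩
    simp [pow_succ]
    ring
  rw [hsum, derPoly_mul_step]
  congr 1
  rw [← Finset.prod_pow_eq_pow_sum]
  refine Finset.prod_congr rfl fun i hi => ?_
  have hi1 : 1 ≤ i := (Finset.mem_Icc.mp hi).1
  rw [mul_comm (m i), pow_mul]
  congr 1
  rw [sub_pow_char_pow, one_pow, ← pow_mul]
  congr 1
  obtain ⟨j, rfl⟩ : ∃ j, i = j + 1 := ⟨i - 1, by omega⟩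
  simp [pow_succ]
  ring

end Aux

theorem derPoly_base_p_congr (p : ℕ) (hp : p.Prime) (hp3 : 3 ≤ p) (s : ℕ) (hs : 1 ≤ s)
    (m : ℕ → ℕ) (hm : ∀ i, i ≤ s → m i < p) :
    (derPoly (m 0 + ∑ i ∈ Finset.Icc 1 s, m i * p ^ i)).map (Int.castRingHom (ZMod p)) =
      (∏ i ∈ Finset.Icc 1 s, (X ^ (p ^ i) - 1) ^ (m i)) *
        (derPoly (m 0)).map (Int.castRingHom (ZMod p)) := by
  haveI : Fact p.Prime := ⟨hp⟩
  exact derPoly_base_p_congr' p s hs m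
end

section
/- Let A : ℕ → ℤ with A_0 = 1, p an odd prime, t an integer with A_{n+p} ≡ t·A_n (mod p) for all n ≥ 0, and A_n(x) = Σ_{k=0}^{n} C(n,k)·A_{n-k}·x^k. Then for every s ≥ 1 and m_0, m_1, …, m_s ≥ 0, A_{m_0 + m_1·p + ⋯ + m_s·p^s}(x) ≡ (x^p + t)^{m_1}·⋯·(x^{p^s} + t)^{m_s}·A_{m_0}(x) modulo p in (ℤ/pℤ)[x]. -/
open Polynomial Finset

/-- The Appell polynomial `A_n(x) = ∑_{k=0}^n C(n,k)·A_{n-k}·x^k` attached to `A : ℕ → ℤ`. -/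
noncomputable def appellPoly (A : ℕ → ℤ) (n : ℕ) : Polynomial ℤ :=
  ∑ k ∈ Finset.range (n + 1), ((n.choose k : ℤ) * A (n - k)) • X ^ k

private lemma coeff_appell (A : ℕ → ℤ) (n k : ℕ) :
    (appellPoly A n).coeff k = (n.choose k : ℤ) * A (n - k) := by
  unfold appellPoly
  rw [finset_sum_coeff]
  simp only [coeff_smul, coeff_X_pow, smul_eq_mul, mul_ite, mul_one, mul_zero]
  rw [Finset.sum_ite_eq (Finset.range (n + 1)) k]
  by_cases h : k ≤ n
  · simp [Nat.lt_succ_of_le h]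
  · simp [Finset.mem_range, Nat.lt_succ_iff, h,
      Nat.choose_eq_zero_of_lt (lt_of_not_ge h)]

private lemma coeff_appell_map (A : ℕ → ℤ) (p : ℕ) (n k : ℕ) :
    ((appellPoly A n).map (Int.castRingHom (ZMod p))).coeff k
      = (n.choose k : ZMod p) * ((A (n - k) : ℤ) : ZMod p) := by
  rw [coeff_map, coeff_appell]
  simp [Int.cast_mul]

private lemma choose_add_p_cast (p : ℕ) (hp : p.Prime) (n k : ℕ) :
    (((n + p).choose k : ZMod p)) =
      (n.choose k : ZMod p) + if p ≤ k then ((n.choose (k - p) : ZMod p)) else 0 := by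
  rw [add_comm n p, Nat.add_choose_eq, Finset.Nat.sum_antidiagonal_eq_sum_range_succ_mk]
  push_cast
  have hvanish : ∀ i ∈ Finset.range (k + 1), i ∉ ({0, p} : Finset ℕ) →
      ((p.choose i : ZMod p)) * ((n.choose (k - i) : ZMod p)) = 0 := by
    intro i _ hi
    simp only [Finset.mem_insert, Finset.mem_singleton, not_or] at hi
    rcases lt_trichotomy i p with h | h | h
    · have : (p.choose i : ZMod p) = 0 := by
        rw [ZMod.natCast_eq_zero_iff]
        exact Nat.Prime.dvd_choose_self hp hi.1 h
      simp [this]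
    · exact absurd h hi.2
    · simp [Nat.choose_eq_zero_of_lt h]
  by_cases hpk : p ≤ k
  · rw [← Finset.sum_subset (s₁ := ({0, p} : Finset ℕ)) ?_ hvanish]
    · rw [Finset.sum_pair hp.ne_zero.symm]
      simp [hpk]
    · intro i hi
      simp only [Finset.mem_insert, Finset.mem_singleton] at hi
      rcases hi with rfl | rfl <;> simp [Finset.mem_range, Nat.lt_succ_iff, hpk]
  · rw [Finset.sum_eq_single 0]
    · simp [hpk]
    · intro i hi hi0
      apply hvanish i hi
      simp only [Finset.mem_insert, Finset.mem_singleton, not_or]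
      refine ⟨hi0, ?_⟩
      rintro rfl
      exact hpk (by simpa [Nat.lt_succ_iff] using hi)
    · simp

private lemma appell_step (A : ℕ → ℤ) (p : ℕ) (hp : p.Prime) (t : ℤ)
    (ht : ∀ n : ℕ, A (n + p) ≡ t * A n [ZMOD p]) (n : ℕ) :
    (appellPoly A (n + p)).map (Int.castRingHom (ZMod p)) =
      (X ^ p + C (t : ZMod p)) * (appellPoly A n).map (Int.castRingHom (ZMod p)) := by
  have hA : ∀ j : ℕ, ((A (j + p) : ℤ) : ZMod p) = (t : ZMod p) * ((A j : ℤ) : ZMod p) := by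
    intro j
    have := (ZMod.intCast_eq_intCast_iff _ _ _).2 (ht j)
    push_cast at this ⊢
    exact this
  ext k
  rw [coeff_appell_map, add_mul, coeff_add, X_pow_mul, coeff_mul_X_pow', coeff_C_mul,
    coeff_appell_map, coeff_appell_map, choose_add_p_cast p hp]
  by_cases hk : k ≤ n
  · have h1 : n + p - k = (n - k) + p := by omega
    rw [h1, hA]
    by_cases hpk : p ≤ k
    · have h2 : n - (k - p) = (n - k) + p := by omega
      simp only [if_pos hpk, h2, hA]
      ring
    · simp only [if_neg hpk]
      ring
  · have hc1 : (n.choose k : ZMod p) = 0 := by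
      rw [Nat.choose_eq_zero_of_lt (lt_of_not_ge hk)]; push_cast; ring
    by_cases hpk : p ≤ k
    · by_cases hk2 : k - p ≤ n
      · have h2 : n - (k - p) = n + p - k := by omega
        simp only [if_pos hpk, h2, hc1]
        ring
      · have hc2 : (n.choose (k - p) : ZMod p) = 0 := by
          rw [Nat.choose_eq_zero_of_lt (lt_of_not_ge hk2)]; push_cast; ring
        simp only [if_pos hpk, hc1, hc2]
        ring
    · simp only [if_neg hpk, hc1]
      ring

private lemma appell_mul_p (A : ℕ → ℤ) (p : ℕ) (hp : p.Prime) (t : ℤ)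
    (ht : ∀ n : ℕ, A (n + p) ≡ t * A n [ZMOD p]) (n M : ℕ) :
    (appellPoly A (n + M * p)).map (Int.castRingHom (ZMod p)) =
      (X ^ p + C (t : ZMod p)) ^ M * (appellPoly A n).map (Int.castRingHom (ZMod p)) := by
  induction M with
  | zero => simp
  | succ M ih =>
    have h : n + (M + 1) * p = (n + M * p) + p := by ring
    rw [h, appell_step A p hp t ht, ih, pow_succ]
    ring

private lemma frob_pow (p : ℕ) (hp : p.Prime) (t : ℤ) (j : ℕ) :
    (X ^ p + C (t : ZMod p)) ^ (p ^ j) = X ^ (p ^ (j + 1)) + C (t : ZMod p) := by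
  haveI : Fact p.Prime := ⟨hp⟩
  induction j with
  | zero => simp
  | succ j ih =>
    rw [pow_succ, pow_mul, ih, add_pow_char, ← pow_mul, ← C_pow, ZMod.pow_card, ← pow_succ]

theorem appell_base_p_congr (A : ℕ → ℤ) (hA0 : A 0 = 1) (p : ℕ) (hp : p.Prime)
    (hodd : Odd p) (t : ℤ) (ht : ∀ n : ℕ, A (n + p) ≡ t * A n [ZMOD p])
    (s : ℕ) (hs : 1 ≤ s) (m : ℕ → ℕ) :
    (appellPoly A (m 0 + ∑ i ∈ Finset.Icc 1 s, m i * p ^ i)).map (Int.castRingHom (ZMod p)) =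
      (∏ i ∈ Finset.Icc 1 s, (X ^ (p ^ i) + C (t : ZMod p)) ^ (m i)) *
        (appellPoly A (m 0)).map (Int.castRingHom (ZMod p)) := by
  have hsum : ∑ i ∈ Finset.Icc 1 s, m i * p ^ i
      = (∑ i ∈ Finset.Icc 1 s, m i * p ^ (i - 1)) * p := by
    rw [Finset.sum_mul]
    refine Finset.sum_congr rfl fun i hi => ?_
    have h1 : 1 ≤ i := (Finset.mem_Icc.1 hi).1
    have : p ^ (i - 1) * p = p ^ i := by
      conv_rhs => rw [show i = (i - 1) + 1 by omega]
      rw [pow_succ]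
    rw [mul_assoc, this]
  have hprod : (∏ i ∈ Finset.Icc 1 s, (X ^ (p ^ i) + C (t : ZMod p)) ^ (m i))
      = (X ^ p + C (t : ZMod p)) ^ (∑ i ∈ Finset.Icc 1 s, m i * p ^ (i - 1)) := by
    rw [← Finset.prod_pow_eq_pow_sum]
    refine Finset.prod_congr rfl fun i hi => ?_
    have h1 : 1 ≤ i := (Finset.mem_Icc.1 hi).1
    rw [mul_comm (m i), pow_mul, frob_pow p hp t, show i - 1 + 1 = i by omega]
  rw [hsum, appell_mul_p A p hp t ht, hprod]
end
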